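/- arXiv:2205.08022 — 8 statements merged into one kernel-verified Lean document; each statement's English description precedes it below -/
import Mathlib

section
/- For a finite simple graph G with vertex set V, the optimal value of the vertex cover LP relaxation equals (|V| + min(0, minsurp(G)))/2, where minsurp(G) is the minimum over all nonempty independent sets I of |N(I)| - |I|. -/
open Finset

/-- `I` is an independent set of vertices in `G`. -/
def IsIndep {V : Type*} (G : SimpleGraph V) (I : Finset V) : Prop :=
  ∀ u ∈ I, ∀ v ∈ I, ¬ G.Adj u v

open Classical in
/-- The (open) neighborhood `N(I)` of a vertex set `I`. -/
noncomputable def nbr {V : Type*} [Fintype V] (G : SimpleGraph V) (I : Finset V) : Finset V :=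
  Finset.univ.filter (fun v => v ∉ I ∧ ∃ u ∈ I, G.Adj u v)

/-- The surplus `|N(I)| - |I|` of a vertex set `I`. -/
noncomputable def surp {V : Type*} [Fintype V] (G : SimpleGraph V) (I : Finset V) : ℤ :=
  ((nbr G I).card : ℤ) - (I.card : ℤ)

/-- `minsurp G`: the minimum surplus over nonempty independent sets. -/
noncomputable def minsurp {V : Type*} [Fintype V] (G : SimpleGraph V) : ℤ :=
  sInf {z : ℤ | ∃ I : Finset V, I.Nonempty ∧ IsIndep G I ∧ z = surp G I}

/-- `θ` is a fractional vertex cover of `G` (feasible point of the VC LP). -/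
def IsFracCover {V : Type*} (G : SimpleGraph V) (θ : V → ℝ) : Prop :=
  (∀ v, 0 ≤ θ v ∧ θ v ≤ 1) ∧ ∀ u v, G.Adj u v → 1 ≤ θ u + θ v

/-- The optimal value of the vertex cover LP relaxation. -/
noncomputable def lpOpt {V : Type*} [Fintype V] (G : SimpleGraph V) : ℝ :=
  sInf {x : ℝ | ∃ θ : V → ℝ, IsFracCover G θ ∧ x = ∑ v, θ v}

/-! The upper bound is attained by the half-integral cover that is `0` on an independent set `I`
attaining the minimum surplus, `1` on `N(I)` and `1/2` elsewhere (`I = ∅` when `minsurp G ≥ 0`).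
For the lower bound, write `Σ (2θ v - 1)` as the integral over `t ∈ [0, 1]` of
`#{v | t < 2θ v - 1} - #{v | t < 1 - 2θ v}`. For `t ≥ 0` the second set is independent and its
neighbourhood lies in the first, so the integrand is at least `min 0 (minsurp G)`. -/

open MeasureTheory

section Surplus

variable {V : Type*} [Fintype V] {G : SimpleGraph V}

lemma mem_nbr {I : Finset V} {v : V} : v ∈ nbr G I ↔ v ∉ I ∧ ∃ u ∈ I, G.Adj u v := by
  simp [nbr]

lemma notMem_nbr_of_mem {I : Finset V} {v : V} (hv : v ∈ I) : v ∉ nbr G I :=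
  fun h => (mem_nbr.1 h).1 hv

lemma IsIndep.mem_nbr {I : Finset V} (hI : IsIndep G I) {u v : V} (hu : u ∈ I)
    (huv : G.Adj u v) : v ∈ nbr G I :=
  _root_.mem_nbr.2 ⟨fun hv => hI u hu v hv huv, u, hu, huv⟩

@[simp]
lemma surp_empty : surp G ∅ = 0 := by
  simp [surp, nbr]

variable (G) in
lemma bddBelow_surp :
    BddBelow {z : ℤ | ∃ I : Finset V, I.Nonempty ∧ IsIndep G I ∧ z = surp G I} := by
  refine ⟨-Fintype.card V, ?_⟩
  rintro _ ⟨I, -, -, rfl⟩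
  have := I.card_le_univ
  simp only [surp]
  omega

lemma IsIndep.min_zero_minsurp_le_surp {I : Finset V} (hI : IsIndep G I) :
    min 0 (minsurp G) ≤ surp G I := by
  rcases I.eq_empty_or_nonempty with rfl | hne
  · simp
  · exact (min_le_right _ _).trans (csInf_le (bddBelow_surp G) ⟨I, hne, hI, rfl⟩)

lemma IsIndep.min_zero_minsurp_le_card_sub_card {I J : Finset V} (hI : IsIndep G I)
    (hIJ : nbr G I ⊆ J) : min 0 (minsurp G) ≤ (#J : ℤ) - #I := by
  have := card_le_card hIJ
  have := hI.min_zero_minsurp_le_surp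
  simp only [surp] at this
  omega

variable (G) in
lemma exists_isIndep_surp_eq_min_zero_minsurp :
    ∃ I : Finset V, IsIndep G I ∧ surp G I = min 0 (minsurp G) := by
  rcases le_or_gt 0 (minsurp G) with h | h
  · exact ⟨∅, by simp [IsIndep], by simp [h]⟩
  · -- `sInf ∅ = 0` in `ℤ`, so a negative `minsurp G` is attained
    have hne :
        {z : ℤ | ∃ I : Finset V, I.Nonempty ∧ IsIndep G I ∧ z = surp G I}.Nonempty := by
      rw [Set.nonempty_iff_ne_empty]
      intro hempty
      simp [minsurp, hempty] at h
    obtain ⟨I, -, hI, hsurp⟩ := Int.csInf_mem hne (bddBelow_surp G)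
    exact ⟨I, hI, by rw [min_eq_right h.le]; exact hsurp.symm⟩

end Surplus

section LP

variable {V : Type*} [Fintype V] {G : SimpleGraph V}

lemma lpOpt_le_sum {θ : V → ℝ} (hθ : IsFracCover G θ) : lpOpt G ≤ ∑ v, θ v :=
  csInf_le ⟨0, by rintro _ ⟨θ', hθ', rfl⟩; exact sum_nonneg fun v _ => (hθ'.1 v).1⟩
    ⟨θ, hθ, rfl⟩

lemma le_lpOpt {c : ℝ} (h : ∀ θ, IsFracCover G θ → c ≤ ∑ v, θ v) : c ≤ lpOpt G :=
  le_csInf ⟨_, fun _ => 1, ⟨fun _ => ⟨zero_le_one, le_rfl⟩, fun _ _ _ => by norm_num⟩, rfl⟩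
    (by rintro _ ⟨θ, hθ, rfl⟩; exact h θ hθ)

variable (G) in
open Classical in
noncomputable def halfCover (I : Finset V) (v : V) : ℝ :=
  1 / 2 + (if v ∈ nbr G I then 1 / 2 else 0) - (if v ∈ I then 1 / 2 else 0)

lemma halfCover_of_mem {I : Finset V} {v : V} (hv : v ∈ I) : halfCover G I v = 0 := by
  simp [halfCover, hv, notMem_nbr_of_mem hv]

lemma halfCover_of_mem_nbr {I : Finset V} {v : V} (hv : v ∈ nbr G I) : halfCover G I v = 1 := by
  simp only [halfCover, hv, if_true, if_neg (mem_nbr.1 hv).1]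
  norm_num

lemma half_le_halfCover_of_notMem {I : Finset V} {v : V} (hv : v ∉ I) :
    1 / 2 ≤ halfCover G I v := by
  simp only [halfCover, hv, if_false]
  split_ifs <;> norm_num

lemma IsIndep.isFracCover_halfCover {I : Finset V} (hI : IsIndep G I) :
    IsFracCover G (halfCover G I) := by
  refine ⟨fun v => ?_, fun u v huv => ?_⟩
  · unfold halfCover
    constructor <;> split_ifs <;> norm_num
  by_cases hu : u ∈ I
  · rw [halfCover_of_mem hu, halfCover_of_mem_nbr (hI.mem_nbr hu huv)]; norm_num
  by_cases hv : v ∈ I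
  · rw [halfCover_of_mem hv, halfCover_of_mem_nbr (hI.mem_nbr hv huv.symm)]; norm_num
  linarith [half_le_halfCover_of_notMem (G := G) hu, half_le_halfCover_of_notMem (G := G) hv]

lemma sum_halfCover (I : Finset V) :
    ∑ v, halfCover G I v = (Fintype.card V + surp G I) / 2 := by
  classical
  simp only [halfCover, sum_sub_distrib, sum_add_distrib, sum_const, sum_ite_mem, univ_inter,
    card_univ, nsmul_eq_mul, surp]
  push_cast
  ring

end LP

section LowerBound

lemma intervalIntegrable_ite_lt (a : ℝ) :
    IntervalIntegrable (fun t => if t < a then (1 : ℝ) else 0) volume 0 1 :=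
  Antitone.intervalIntegrable fun s t hst => by
    split_ifs <;> linarith

lemma integral_ite_lt {a : ℝ} (ha : a ≤ 1) :
    ∫ t in (0 : ℝ)..1, (if t < a then (1 : ℝ) else 0) = max a 0 := by
  have hind : (fun t => if t < a then (1 : ℝ) else 0) = (Set.Iio a).indicator 1 := by
    ext t
    simp [Set.indicator_apply]
  have hIoo : Set.Iio a ∩ Set.Ioc 0 1 = Set.Ioo 0 a := by
    ext t
    simp only [Set.mem_inter_iff, Set.mem_Iio, Set.mem_Ioc, Set.mem_Ioo]
    constructor
    · rintro ⟨hta, h0t, -⟩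
      exact ⟨h0t, hta⟩
    · rintro ⟨h0t, hta⟩
      exact ⟨hta, h0t, by linarith⟩
  rw [intervalIntegral.integral_of_le zero_le_one, hind, integral_indicator_one measurableSet_Iio,
    measureReal_def, Measure.restrict_apply measurableSet_Iio, hIoo, Real.volume_Ioo, sub_zero,
    ENNReal.toReal_ofReal']

lemma integral_ite_lt_sub_ite_lt_neg {a : ℝ} (ha₀ : -1 ≤ a) (ha₁ : a ≤ 1) :
    ∫ t in (0 : ℝ)..1, ((if t < a then (1 : ℝ) else 0) - (if t < -a then 1 else 0)) = a := by
  rw [intervalIntegral.integral_sub (intervalIntegrable_ite_lt a) (intervalIntegrable_ite_lt (-a)),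
    integral_ite_lt ha₁, integral_ite_lt (by linarith), max_zero_sub_max_neg_zero_eq_self]

variable {V : Type*} [Fintype V] {G : SimpleGraph V} {θ : V → ℝ}

lemma IsFracCover.isIndep_filter (hθ : IsFracCover G θ) {t : ℝ} (ht : 0 ≤ t) :
    IsIndep G {v | t < 1 - 2 * θ v} := by
  intro u hu v hv huv
  simp only [mem_filter, mem_univ, true_and] at hu hv
  linarith [hθ.2 u v huv]

lemma IsFracCover.nbr_filter_subset (hθ : IsFracCover G θ) (t : ℝ) :
    nbr G {v | t < 1 - 2 * θ v} ⊆ ({v | t < 2 * θ v - 1} : Finset V) := by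
  intro v hv
  obtain ⟨-, u, hu, huv⟩ := mem_nbr.1 hv
  simp only [mem_filter, mem_univ, true_and] at hu ⊢
  linarith [hθ.2 u v huv]

lemma IsFracCover.half_card_add_min_zero_minsurp_le_sum (hθ : IsFracCover G θ) :
    (Fintype.card V + (min 0 (minsurp G) : ℤ)) / 2 ≤ ∑ v, θ v := by
  set m : ℝ := ((min 0 (minsurp G) : ℤ) : ℝ) with hm
  set g : V → ℝ → ℝ := fun v t =>
    (if t < 2 * θ v - 1 then 1 else 0) - (if t < -(2 * θ v - 1) then 1 else 0)
  have hg : ∀ v, IntervalIntegrable (g v) volume 0 1 := fun v =>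
    (intervalIntegrable_ite_lt _).sub (intervalIntegrable_ite_lt _)
  have hlevel : ∀ t ∈ Set.Icc (0 : ℝ) 1, m ≤ ∑ v, g v t := by
    intro t ht
    have hsum : ∑ v, g v t = (#{v | t < 2 * θ v - 1} : ℝ) - #{v | t < 1 - 2 * θ v} := by
      simp only [g, sum_sub_distrib, sum_boole, neg_sub]
    rw [hsum, hm]
    exact_mod_cast (hθ.isIndep_filter ht.1).min_zero_minsurp_le_card_sub_card
      (hθ.nbr_filter_subset t)
  have hlayer : m ≤ ∑ v, (2 * θ v - 1) :=
    calc m = ∫ _ in (0 : ℝ)..1, m := by simp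
      _ ≤ ∫ t in (0 : ℝ)..1, ∑ v, g v t :=
        intervalIntegral.integral_mono_on zero_le_one intervalIntegrable_const
          (by simpa only [← Finset.sum_apply] using IntervalIntegrable.sum univ fun v _ => hg v)
          hlevel
      _ = ∑ v, ∫ t in (0 : ℝ)..1, g v t := intervalIntegral.integral_finsetSum fun v _ => hg v
      _ = ∑ v, (2 * θ v - 1) := sum_congr rfl fun v _ =>
        integral_ite_lt_sub_ite_lt_neg (by linarith [(hθ.1 v).1]) (by linarith [(hθ.1 v).2])
  rw [sum_sub_distrib, ← mul_sum, sum_const, card_univ, nsmul_eq_mul, mul_one] at hlayer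
  linarith

end LowerBound

/-- The LP optimum equals `(|V| + min(0, minsurp G)) / 2`. -/
theorem lpOpt_eq_half_card_add_minsurp {V : Type*} [Fintype V] (G : SimpleGraph V) :
    lpOpt G = ((Fintype.card V : ℝ) + ((min 0 (minsurp G) : ℤ) : ℝ)) / 2 := by
  obtain ⟨I, hI, hsurp⟩ := exists_isIndep_surp_eq_min_zero_minsurp G
  refine le_antisymm ?_ (le_lpOpt fun θ hθ => hθ.half_card_add_min_zero_minsurp_le_sum)
  calc lpOpt G ≤ ∑ v, halfCover G I v := lpOpt_le_sum hI.isFracCover_halfCover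
    _ = _ := by rw [sum_halfCover, hsurp]
end

section
/- Every basic optimal solution of the vertex cover LP relaxation of a finite simple graph is half-integral: every vertex receives value 0, 1/2, or 1. -/
theorem IsFracCover.comp {V : Type*} {G : SimpleGraph V} {θ : V → ℝ} (hθ : IsFracCover G θ)
    {f : ℝ → ℝ} (hf : Monotone f) (hf_zero : 0 ≤ f 0) (hf_one_sub : ∀ x, f (1 - x) = 1 - f x) :
    IsFracCover G (fun v => f (θ v)) := by
  obtain ⟨hbound, hedge⟩ := hθ
  refine ⟨fun v => ⟨hf_zero.trans (hf (hbound v).1), ?_⟩, fun u v huv => ?_⟩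
  · have hf_le_one : f 1 ≤ 1 := by
      linarith [show f 1 = 1 - f 0 by simpa using hf_one_sub 0]
    exact (hf (hbound v).2).trans hf_le_one
  · have hmono : f (1 - θ v) ≤ f (θ u) := hf (by linarith [hedge u v huv])
    linarith [hf_one_sub (θ v)]

noncomputable def zigzag (x : ℝ) : ℝ :=
  max (x - 1) (min x (1 / 2 - x))

theorem zigzag_zero : zigzag 0 = 0 := by
  norm_num [zigzag]

theorem zigzag_one_sub (x : ℝ) : zigzag (1 - x) = -zigzag x := by
  simp only [zigzag, max_def, min_def]
  split_ifs <;> linarith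

theorem monotone_add_zigzag : Monotone fun x => x + zigzag x := by
  intro a b hab
  simp only [zigzag, max_def, min_def]
  split_ifs <;> linarith

theorem monotone_sub_zigzag : Monotone fun x => x - zigzag x := by
  intro a b hab
  simp only [zigzag, max_def, min_def]
  split_ifs <;> linarith

theorem eq_zero_or_eq_half_or_eq_one_of_zigzag_eq_zero {x : ℝ} (h₀ : 0 ≤ x) (h₁ : x ≤ 1)
    (hx : zigzag x = 0) : x = 0 ∨ x = 1 / 2 ∨ x = 1 := by
  simp only [zigzag, max_def, min_def] at hx
  split_ifs at hx <;> first | (left; linarith) | (right; left; linarith) | (right; right; linarith)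

theorem basic_optimal_solution_half_integral_general {V : Type*} (G : SimpleGraph V)
    (θ : V → ℝ) (hθ : IsFracCover G θ)
    (hextreme : ∀ θ₁ θ₂ : V → ℝ, IsFracCover G θ₁ → IsFracCover G θ₂ →
      (∀ v, θ v = (θ₁ v + θ₂ v) / 2) → θ₁ = θ₂) :
    ∀ v, θ v = 0 ∨ θ v = 1/2 ∨ θ v = 1 := by
  have hplus : IsFracCover G fun v => θ v + zigzag (θ v) :=
    hθ.comp monotone_add_zigzag (by simp [zigzag_zero])
      fun x => by rw [zigzag_one_sub]; ring
  have hminus : IsFracCover G fun v => θ v - zigzag (θ v) :=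
    hθ.comp monotone_sub_zigzag (by simp [zigzag_zero])
      fun x => by rw [zigzag_one_sub]; ring
  have hsplit := hextreme _ _ hplus hminus fun v => by ring
  intro v
  refine eq_zero_or_eq_half_or_eq_one_of_zigzag_eq_zero (hθ.1 v).1 (hθ.1 v).2 ?_
  linarith [congrFun hsplit v]

/-- Every basic (extreme-point) optimal solution of the vertex cover LP is half-integral. -/
theorem basic_optimal_solution_half_integral {V : Type*} [Fintype V] (G : SimpleGraph V)
    (θ : V → ℝ) (hθ : IsFracCover G θ)
    (hopt : ∀ η : V → ℝ, IsFracCover G η → ∑ v, θ v ≤ ∑ v, η v)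
    (hextreme : ∀ θ₁ θ₂ : V → ℝ, IsFracCover G θ₁ → IsFracCover G θ₂ →
      (∀ v, θ v = (θ₁ v + θ₂ v) / 2) → θ₁ = θ₂) :
    ∀ v, θ v = 0 ∨ θ v = 1/2 ∨ θ v = 1 :=
  basic_optimal_solution_half_integral_general G θ hθ hextreme
end

section
/- Let I be a critical-set of a graph G with surp(I) = 1. If G has a vertex cover of size at most k, then G has a vertex cover C of size at most k such that either C ∩ N[I] = I or C ∩ N[I] = N(I). -/
open Finset

/-- `C` is a vertex cover of `G`. -/
def IsCover {V : Type*} (G : SimpleGraph V) (C : Finset V) : Prop :=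
  ∀ u v, G.Adj u v → u ∈ C ∨ v ∈ C

/-- For a critical-set `I` with surplus `1`, if `G` has a vertex cover of size at most `k`,
then it has one `C` with `C ∩ N[I] = I` or `C ∩ N[I] = N(I)`. -/
theorem critical_set_surplus_one_cover {V : Type*} [Fintype V] [DecidableEq V]
    (G : SimpleGraph V) (I : Finset V) (k : ℕ)
    (hne : I.Nonempty) (hind : IsIndep G I)
    (hcrit : ∀ J ⊆ I, J.Nonempty → surp G I ≤ surp G J)
    (hsurp : surp G I = 1)
    (hcov : ∃ C : Finset V, IsCover G C ∧ C.card ≤ k) :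
    ∃ C : Finset V, IsCover G C ∧ C.card ≤ k ∧
      (C ∩ (I ∪ nbr G I) = I ∨ C ∩ (I ∪ nbr G I) = nbr G I) := by
  classical
  obtain ⟨C, hC, hCk⟩ := hcov
  set S := I ∪ nbr G I with hS
  by_cases hCI : C ∩ S = I
  · exact ⟨C, hC, hCk, Or.inl hCI⟩
  have hInbr : ∀ v ∈ nbr G I, v ∉ I := by
    intro v hv
    simp only [nbr, mem_filter] at hv
    exact hv.2.1
  have hdisj : Disjoint I (nbr G I) := by
    rw [disjoint_right]; exact hInbr
  have hcardN : (nbr G I).card = I.card + 1 := by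
    have h : ((nbr G I).card : ℤ) = (I.card : ℤ) + 1 := by
      unfold surp at hsurp; linarith
    exact_mod_cast h
  -- key cardinality bound
  have hbig : I.card + 1 ≤ (C ∩ S).card := by
    have hsplit : (C ∩ S).card = (C ∩ I).card + (C ∩ nbr G I).card := by
      rw [hS, inter_union_distrib_left]
      exact card_union_of_disjoint (hdisj.mono inter_subset_right inter_subset_right)
    by_cases hIC : I ⊆ C
    · have hA : C ∩ I = I := inter_eq_right.mpr hIC
      have hB : (C ∩ nbr G I).Nonempty := by
        by_contra hB
        apply hCI
        rw [hS, inter_union_distrib_left, hA, not_nonempty_iff_eq_empty.mp hB, union_empty]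
      have hBpos := card_pos.mpr hB
      rw [hA] at hsplit
      omega
    · set J := I \ C with hJ
      have hJne : J.Nonempty := sdiff_nonempty.mpr hIC
      have hsub : nbr G J ⊆ C ∩ nbr G I := by
        intro v hv
        simp only [nbr, mem_filter] at hv
        obtain ⟨-, hvJ, u, huJ, hadj⟩ := hv
        have huI : u ∈ I := (mem_sdiff.mp huJ).1
        have huC : u ∉ C := (mem_sdiff.mp huJ).2
        have hvC : v ∈ C := (hC u v hadj).resolve_left huC
        have hvI : v ∉ I := fun hvI => hind u huI v hvI hadj
        simp only [mem_inter, nbr, mem_filter, mem_univ, true_and]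
        exact ⟨hvC, hvI, u, huI, hadj⟩
      have hcr := hcrit J sdiff_subset hJne
      rw [hsurp] at hcr
      unfold surp at hcr
      have hJb : J.card + 1 ≤ (nbr G J).card := by
        have : (J.card : ℤ) + 1 ≤ ((nbr G J).card : ℤ) := by linarith
        exact_mod_cast this
      have h1 : (nbr G J).card ≤ (C ∩ nbr G I).card := card_le_card hsub
      have h2 : (C ∩ I).card + J.card = I.card := by
        rw [hJ, inter_comm]
        exact card_inter_add_card_sdiff I C
      omega
  -- the new cover
  set C' := (C \ S) ∪ nbr G I with hC'
  have hNS : nbr G I ⊆ S := subset_union_right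
  refine ⟨C', ?_, ?_, Or.inr ?_⟩
  · -- cover
    have key : ∀ u v, G.Adj u v → u ∈ C → u ∈ C' ∨ v ∈ C' := by
      intro u v hadj huC
      by_cases huS : u ∈ S
      · rcases mem_union.mp huS with huI | hun
        · right
          have hvI : v ∉ I := fun hvI => hind u huI v hvI hadj
          have : v ∈ nbr G I := by
            simp only [nbr, mem_filter, mem_univ, true_and]
            exact ⟨hvI, u, huI, hadj⟩
          exact mem_union_right _ this
        · exact Or.inl (mem_union_right _ hun)
      · exact Or.inl (mem_union_left _ (mem_sdiff.mpr ⟨huC, huS⟩))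
    intro u v hadj
    rcases hC u v hadj with h | h
    · exact key u v hadj h
    · exact (key v u hadj.symm h).symm
  · -- cardinality
    have h1 : C'.card ≤ (C \ S).card + (nbr G I).card := card_union_le _ _
    have h2 : (C ∩ S).card + (C \ S).card = C.card := card_inter_add_card_sdiff C S
    omega
  · -- intersection
    ext v
    simp only [hC', mem_inter, mem_union, mem_sdiff]
    constructor
    · rintro ⟨h1 | h1, h2⟩
      · exact absurd h2 h1.2
      · exact h1
    · intro hv
      exact ⟨Or.inr hv, hS ▸ mem_union_right _ hv⟩
end

section
/- For any nonempty independent set I of a graph G, minsurp(G) ≤ minsurp⁻(G − N[I]) + surp_G(I), where minsurp⁻(H) = min(0, minsurp(H)). Moreover, equality holds if and only if I is contained in some min-set of G (a nonempty independent set achieving minsurp(G)). -/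
open Finset

open Classical in
/-- The neighborhood of `I` inside the induced subgraph of `G` on `S`. -/
noncomputable def nbrOn {V : Type*} (G : SimpleGraph V) (S I : Finset V) : Finset V :=
  S.filter (fun v => v ∉ I ∧ ∃ u ∈ I, G.Adj u v)

/-- The surplus of `I` inside the induced subgraph of `G` on `S`. -/
noncomputable def surpOn {V : Type*} (G : SimpleGraph V) (S I : Finset V) : ℤ :=
  ((nbrOn G S I).card : ℤ) - (I.card : ℤ)

/-- The minimum surplus over nonempty independent sets of the induced subgraph of `G` on `S`. -/
noncomputable def minsurpOn {V : Type*} (G : SimpleGraph V) (S : Finset V) : ℤ :=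
  sInf {z : ℤ | ∃ I : Finset V, I ⊆ S ∧ I.Nonempty ∧ IsIndep G I ∧ z = surpOn G S I}

section Aux
variable {V : Type*} [Fintype V] [DecidableEq V] (G : SimpleGraph V)

lemma mem_nbrOn {S A : Finset V} {v : V} :
    v ∈ nbrOn G S A ↔ v ∈ S ∧ v ∉ A ∧ ∃ u ∈ A, G.Adj u v := by
  classical
  simp [nbrOn]

lemma bddBelow_surpSet (S : Finset V) :
    BddBelow {z : ℤ | ∃ A : Finset V, A ⊆ S ∧ A.Nonempty ∧ IsIndep G A ∧ z = surpOn G S A} := by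
  refine ⟨-(Fintype.card V : ℤ), ?_⟩
  rintro z ⟨A, hAS, -, -, rfl⟩
  have h1 : (A.card : ℤ) ≤ (Fintype.card V : ℤ) := by
    exact_mod_cast (Finset.card_le_univ A).trans_eq (Finset.card_univ)
  have h2 : (0:ℤ) ≤ ((nbrOn G S A).card : ℤ) := Int.natCast_nonneg _
  simp only [surpOn]
  linarith

lemma minsurpOn_le_surpOn {S A : Finset V} (hAS : A ⊆ S) (hA : A.Nonempty)
    (hind : IsIndep G A) : minsurpOn G S ≤ surpOn G S A :=
  csInf_le (bddBelow_surpSet G S) ⟨A, hAS, hA, hind, rfl⟩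

lemma key {I J : Finset V} (hI : IsIndep G I) (hJ : IsIndep G J)
    (hJS : J ⊆ Finset.univ \ (I ∪ nbrOn G Finset.univ I)) :
    IsIndep G (I ∪ J) ∧
    surpOn G Finset.univ (I ∪ J)
      = surpOn G Finset.univ I + surpOn G (Finset.univ \ (I ∪ nbrOn G Finset.univ I)) J := by
  set S' := Finset.univ \ (I ∪ nbrOn G Finset.univ I) with hS'
  have hJI : ∀ v ∈ J, v ∉ I := by
    intro v hv hvI
    have h := hJS hv
    rw [hS', mem_sdiff, mem_union] at h
    exact h.2 (Or.inl hvI)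
  have hJN : ∀ v ∈ J, ∀ u ∈ I, ¬ G.Adj u v := by
    intro v hv u hu hadj
    have h := hJS hv
    rw [hS', mem_sdiff, mem_union] at h
    exact h.2 (Or.inr ((mem_nbrOn G).2 ⟨mem_univ v, hJI v hv, u, hu, hadj⟩))
  have hindU : IsIndep G (I ∪ J) := by
    intro u hu v hv hadj
    rcases mem_union.1 hu with hu' | hu' <;> rcases mem_union.1 hv with hv' | hv'
    · exact hI u hu' v hv' hadj
    · exact hJN v hv' u hu' hadj
    · exact hJN u hu' v hv' hadj.symm
    · exact hJ u hu' v hv' hadj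
  have hN : nbrOn G Finset.univ (I ∪ J) = nbrOn G Finset.univ I ∪ nbrOn G S' J := by
    ext v
    rw [mem_union]
    constructor
    · intro hv
      obtain ⟨-, hvIJ, u, hu, hadj⟩ := (mem_nbrOn G).1 hv
      rw [mem_union] at hvIJ hu
      push_neg at hvIJ
      by_cases hvN : v ∈ nbrOn G Finset.univ I
      · exact Or.inl hvN
      · have huJ : u ∈ J := by
          rcases hu with hu | hu
          · exact absurd ((mem_nbrOn G).2 ⟨mem_univ v, hvIJ.1, u, hu, hadj⟩) hvN
          · exact hu
        refine Or.inr ((mem_nbrOn G).2 ⟨?_, hvIJ.2, u, huJ, hadj⟩)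
        rw [hS', mem_sdiff, mem_union]
        exact ⟨mem_univ v, fun h => h.elim hvIJ.1 hvN⟩
    · rintro (hv | hv)
      · obtain ⟨-, hvI, u, hu, hadj⟩ := (mem_nbrOn G).1 hv
        have hvJ : v ∉ J := fun hvJ => hJN v hvJ u hu hadj
        exact (mem_nbrOn G).2 ⟨mem_univ v,
          by rw [mem_union]; exact fun h => h.elim hvI hvJ, u, mem_union_left _ hu, hadj⟩
      · obtain ⟨hvS, hvJ, u, hu, hadj⟩ := (mem_nbrOn G).1 hv
        rw [hS', mem_sdiff, mem_union] at hvS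
        push_neg at hvS
        exact (mem_nbrOn G).2 ⟨mem_univ v,
          by rw [mem_union]; exact fun h => h.elim hvS.2.1 hvJ, u, mem_union_right _ hu, hadj⟩
  have hdN : Disjoint (nbrOn G Finset.univ I) (nbrOn G S' J) := by
    rw [Finset.disjoint_left]
    intro v hv hv'
    have hS := ((mem_nbrOn G).1 hv').1
    rw [hS', mem_sdiff, mem_union] at hS
    exact hS.2 (Or.inr hv)
  have hdIJ : Disjoint I J := by
    rw [Finset.disjoint_right]
    exact fun {a} ha => hJI a ha
  refine ⟨hindU, ?_⟩
  have c1 : (I ∪ J).card = I.card + J.card := card_union_of_disjoint hdIJ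
  have c2 : (nbrOn G Finset.univ (I ∪ J)).card
      = (nbrOn G Finset.univ I).card + (nbrOn G S' J).card := by
    rw [hN, card_union_of_disjoint hdN]
  simp only [surpOn, c1, c2]
  push_cast
  ring

end Aux

/-- For any nonempty independent set `I`,
`minsurp(G) ≤ minsurp⁻(G − N[I]) + surp_G(I)`, with equality iff `I` is contained
in a min-set of `G`. -/
theorem minsurp_le_minsurp_del_closedNbhd {V : Type*} [Fintype V] [DecidableEq V]
    (G : SimpleGraph V) (I : Finset V) (hne : I.Nonempty) (hind : IsIndep G I) :
    minsurpOn G Finset.univ ≤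
      min 0 (minsurpOn G (Finset.univ \ (I ∪ nbrOn G Finset.univ I))) + surpOn G Finset.univ I ∧
    (minsurpOn G Finset.univ =
      min 0 (minsurpOn G (Finset.univ \ (I ∪ nbrOn G Finset.univ I))) + surpOn G Finset.univ I ↔
      ∃ M : Finset V, M.Nonempty ∧ IsIndep G M ∧
        surpOn G Finset.univ M = minsurpOn G Finset.univ ∧ I ⊆ M) := by
  set S' := Finset.univ \ (I ∪ nbrOn G Finset.univ I) with hS'
  set μ := minsurpOn G Finset.univ with hμ
  set μ' := minsurpOn G S' with hμ'
  set s := surpOn G Finset.univ I with hs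
  have hle_s : μ ≤ s := minsurpOn_le_surpOn G (subset_univ I) hne hind
  have hbdd' := bddBelow_surpSet G S'
  -- main inequality
  have hmain : μ ≤ min 0 μ' + s := by
    by_cases hset :
        ({z : ℤ | ∃ A : Finset V, A ⊆ S' ∧ A.Nonempty ∧ IsIndep G A ∧ z = surpOn G S' A}).Nonempty
    · obtain ⟨J, hJS, hJne, hJind, hJeq⟩ := Int.csInf_mem hset hbdd'
      obtain ⟨hindU, heq⟩ := key G hind hJind hJS
      have hUne : (I ∪ J).Nonempty := hne.mono subset_union_left
      have h1 : μ ≤ s + μ' := by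
        have := minsurpOn_le_surpOn G (subset_univ (I ∪ J)) hUne hindU
        rw [heq] at this
        rw [show μ' = surpOn G S' J from hJeq]
        exact this
      rcases min_choice 0 μ' with h | h <;> rw [h]
      · simpa using hle_s
      · linarith
    · have h0 : μ' = 0 := by
        rw [hμ', minsurpOn, Set.not_nonempty_iff_eq_empty.1 hset]
        exact Int.csInf_empty
      rw [h0]
      simpa using hle_s
  refine ⟨hmain, ?_, ?_⟩
  · -- equality → exists min-set containing I
    intro heq
    rcases le_or_gt 0 μ' with h | h
    · refine ⟨I, hne, hind, ?_, subset_rfl⟩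
      rw [min_eq_left h, zero_add] at heq
      exact heq.symm
    · rw [min_eq_right h.le] at heq
      have hset :
          ({z : ℤ | ∃ A : Finset V, A ⊆ S' ∧ A.Nonempty ∧ IsIndep G A ∧ z = surpOn G S' A}).Nonempty := by
        by_contra hc
        have h0 : μ' = 0 := by
          rw [hμ', minsurpOn, Set.not_nonempty_iff_eq_empty.1 hc]
          exact Int.csInf_empty
        omega
      obtain ⟨J, hJS, hJne, hJind, hJeq⟩ := Int.csInf_mem hset hbdd'
      obtain ⟨hindU, hkey⟩ := key G hind hJind hJS
      refine ⟨I ∪ J, hne.mono subset_union_left, hindU, ?_, subset_union_left⟩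
      have hJeq' : μ' = surpOn G S' J := hJeq
      rw [hkey, ← hJeq', ← hs, heq]
      ring
  · -- exists min-set containing I → equality
    rintro ⟨M, hMne, hMind, hMeq, hIM⟩
    refine le_antisymm hmain ?_
    set J := M ∩ S' with hJ
    have hMsplit : M = I ∪ J := by
      ext v
      rw [mem_union, hJ, mem_inter]
      constructor
      · intro hv
        by_cases hvI : v ∈ I
        · exact Or.inl hvI
        · refine Or.inr ⟨hv, ?_⟩
          rw [hS', mem_sdiff, mem_union]
          refine ⟨mem_univ v, ?_⟩
          rintro (h | h)
          · exact hvI h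
          · obtain ⟨-, -, u, hu, hadj⟩ := (mem_nbrOn G).1 h
            exact hMind u (hIM hu) v hv hadj
      · rintro (h | h)
        · exact hIM h
        · exact h.1
    rcases J.eq_empty_or_nonempty with hJe | hJne
    · have : M = I := by rw [hMsplit, hJe, union_empty]
      have hsm : s = μ := by rw [hs, ← this, hMeq]
      have : min 0 μ' ≤ 0 := min_le_left _ _
      linarith [hsm.ge]
    · have hJS : J ⊆ S' := inter_subset_right
      have hJind : IsIndep G J := fun u hu v hv => hMind u (inter_subset_left hu) v (inter_subset_left hv)
      obtain ⟨-, hkey⟩ := key G hind hJind hJS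
      have h1 : μ' ≤ surpOn G S' J := minsurpOn_le_surpOn G hJS hJne hJind
      have h2 : surpOn G Finset.univ M = s + surpOn G S' J := by rw [hMsplit]; exact hkey
      have h3 : min 0 μ' ≤ μ' := min_le_right _ _
      rw [← hMeq, h2]
      linarith
end

section
/- Suppose minsurp(G) ≥ 2. Then for any independent set I in G, minsurp(G − I) ≥ 2 − |I|, and minsurp(G − N[I]) ≥ 2 − surp_G(I). In particular, for any single vertex u, minsurp(G − u) ≥ 1 and minsurp(G − N[u]) ≥ 3 − deg(u). -/
open Finset

section Aux

variable {V : Type*} [Fintype V] [DecidableEq V] (G : SimpleGraph V)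

lemma aux_bdd (S : Finset V) :
    BddBelow {z : ℤ | ∃ I : Finset V, I ⊆ S ∧ I.Nonempty ∧ IsIndep G I ∧ z = surpOn G S I} := by
  refine ⟨-(Fintype.card V : ℤ), ?_⟩
  rintro z ⟨I, -, -, -, rfl⟩
  have h := Finset.card_le_univ I
  simp only [surpOn]
  have : (0:ℤ) ≤ ((nbrOn G S I).card : ℤ) := by positivity
  have : (I.card : ℤ) ≤ (Fintype.card V : ℤ) := by exact_mod_cast h
  omega

lemma aux_min_le {S : Finset V} {I : Finset V} (hIS : I ⊆ S) (hne : I.Nonempty)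
    (hind : IsIndep G I) : minsurpOn G S ≤ surpOn G S I :=
  csInf_le (aux_bdd G S) ⟨I, hIS, hne, hind, rfl⟩

/-- From the hypothesis, every nonempty independent set has surplus ≥ 2. -/
lemma aux_surp_ge (hms : 2 ≤ minsurpOn G Finset.univ) {I : Finset V} (hne : I.Nonempty)
    (hind : IsIndep G I) : 2 ≤ surpOn G Finset.univ I :=
  le_trans hms (aux_min_le G (Finset.subset_univ I) hne hind)

lemma aux_le_min {S : Finset V} {b : ℤ}
    (h : ∀ J : Finset V, J ⊆ S → J.Nonempty → IsIndep G J → b ≤ surpOn G S J)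
    (h0 : S = ∅ → b ≤ 0) : b ≤ minsurpOn G S := by
  rcases S.eq_empty_or_nonempty with hS | ⟨v, hv⟩
  · have he : {z : ℤ | ∃ I : Finset V, I ⊆ S ∧ I.Nonempty ∧ IsIndep G I ∧
        z = surpOn G S I} = ∅ := by
      ext z
      simp only [Set.mem_setOf_eq, Set.mem_empty_iff_false, iff_false]
      rintro ⟨J, hJS, ⟨x, hx⟩, -, -⟩
      have := hJS hx
      simp [hS] at this
    rw [minsurpOn, he, Int.csInf_empty]; exact h0 hS
  · have hvind : IsIndep G {v} := by
      intro a ha b hb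
      simp only [Finset.mem_singleton] at ha hb
      subst ha; subst hb; exact G.irrefl
    refine le_csInf ⟨surpOn G S {v}, {v}, by simpa using hv, ⟨v, Finset.mem_singleton_self v⟩,
      hvind, rfl⟩ ?_
    rintro z ⟨J, hJS, hJne, hJind, rfl⟩
    exact h J hJS hJne hJind

lemma aux_V_nonempty (hms : 2 ≤ minsurpOn G Finset.univ) : Nonempty V := by
  by_contra h
  rw [not_nonempty_iff] at h
  have he : {z : ℤ | ∃ I : Finset V, I ⊆ Finset.univ ∧ I.Nonempty ∧ IsIndep G I ∧
      z = surpOn G Finset.univ I} = ∅ := by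
    ext z
    simp only [Set.mem_setOf_eq, Set.mem_empty_iff_false, iff_false]
    rintro ⟨I, -, ⟨x, -⟩, -⟩
    exact h.elim x
  rw [minsurpOn, he, Int.csInf_empty] at hms
  omega

end Aux

/-- If `minsurp(G) ≥ 2`, then for any independent set `I`,
`minsurp(G − I) ≥ 2 − |I|` and `minsurp(G − N[I]) ≥ 2 − surp_G(I)`; in particular for any
vertex `u`, `minsurp(G − u) ≥ 1` and `minsurp(G − N[u]) ≥ 3 − deg(u)`. -/
theorem minsurp_del_lower_bounds {V : Type*} [Fintype V] [DecidableEq V]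
    (G : SimpleGraph V) [DecidableRel G.Adj]
    (hms : 2 ≤ minsurpOn G Finset.univ) :
    (∀ I : Finset V, IsIndep G I →
      2 - (I.card : ℤ) ≤ minsurpOn G (Finset.univ \ I) ∧
      2 - surpOn G Finset.univ I ≤ minsurpOn G (Finset.univ \ (I ∪ nbrOn G Finset.univ I))) ∧
    (∀ u : V,
      1 ≤ minsurpOn G (Finset.univ \ {u}) ∧
      3 - (G.degree u : ℤ) ≤ minsurpOn G (Finset.univ \ ({u} ∪ nbrOn G Finset.univ {u}))) := by
  have key : ∀ I : Finset V, IsIndep G I →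
      2 - (I.card : ℤ) ≤ minsurpOn G (Finset.univ \ I) ∧
      2 - surpOn G Finset.univ I ≤ minsurpOn G (Finset.univ \ (I ∪ nbrOn G Finset.univ I)) := by
    intro I hI
    constructor
    · -- part 1 : minsurp(G - I) ≥ 2 - |I|
      refine aux_le_min G ?_ ?_
      · intro J hJS hJne hJind
        have h2 := aux_surp_ge G hms hJne hJind
        have hnbr : nbrOn G (Finset.univ \ I) J = nbrOn G Finset.univ J \ I := by
          ext v
          simp only [nbrOn, Finset.mem_filter, Finset.mem_sdiff, Finset.mem_univ, true_and]
          tauto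
        have hcard : (nbrOn G Finset.univ J).card ≤
            (nbrOn G (Finset.univ \ I) J).card + I.card := by
          rw [hnbr]; exact Finset.card_le_card_sdiff_add_card
        have hcard' : ((nbrOn G Finset.univ J).card : ℤ) ≤
            ((nbrOn G (Finset.univ \ I) J).card : ℤ) + (I.card : ℤ) := by exact_mod_cast hcard
        simp only [surpOn] at h2 ⊢
        omega
      · intro hS
        have hIuniv : I = Finset.univ := by
          have := Finset.sdiff_eq_empty_iff_subset.mp hS
          exact Finset.eq_univ_of_forall (fun x => this (Finset.mem_univ x))
        obtain ⟨x⟩ := aux_V_nonempty G hms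
        have hIne : I.Nonempty := ⟨x, by simp [hIuniv]⟩
        have h2 := aux_surp_ge G hms hIne hI
        have hnbr : nbrOn G Finset.univ I = ∅ := by
          ext v
          simp [nbrOn, hIuniv]
        rw [surpOn, hnbr] at h2
        simp at h2
        have : (0:ℤ) ≤ (I.card : ℤ) := by positivity
        omega
    · -- part 2
      set S := Finset.univ \ (I ∪ nbrOn G Finset.univ I) with hSdef
      refine aux_le_min G ?_ ?_
      · intro J hJS hJne hJind
        have hJnotI : ∀ v ∈ J, v ∉ I := by
          intro v hv
          have := hJS hv
          simp only [hSdef, Finset.mem_sdiff, Finset.mem_union, not_or] at this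
          exact this.2.1
        have hJnotN : ∀ v ∈ J, v ∉ nbrOn G Finset.univ I := by
          intro v hv
          have := hJS hv
          simp only [hSdef, Finset.mem_sdiff, Finset.mem_union, not_or] at this
          exact this.2.2
        have hIJ : ∀ u ∈ I, ∀ v ∈ J, ¬ G.Adj u v := by
          intro u hu v hv hadj
          exact hJnotN v hv (by
            simp only [nbrOn, Finset.mem_filter, Finset.mem_univ, true_and]
            exact ⟨hJnotI v hv, u, hu, hadj⟩)
        have hdisj : Disjoint I J :=
          Finset.disjoint_right.mpr hJnotI
        have hKind : IsIndep G (I ∪ J) := by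
          intro a ha b hb hadj
          rcases Finset.mem_union.mp ha with ha' | ha' <;>
            rcases Finset.mem_union.mp hb with hb' | hb'
          · exact hI a ha' b hb' hadj
          · exact hIJ a ha' b hb' hadj
          · exact hIJ b hb' a ha' hadj.symm
          · exact hJind a ha' b hb' hadj
        have hKne : (I ∪ J).Nonempty := hJne.mono Finset.subset_union_right
        have h2 := aux_surp_ge G hms hKne hKind
        have hKcard : (I ∪ J).card = I.card + J.card := Finset.card_union_of_disjoint hdisj
        have hsub : nbrOn G Finset.univ (I ∪ J) ⊆ nbrOn G Finset.univ I ∪ nbrOn G S J := by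
          intro v hv
          simp only [nbrOn, Finset.mem_filter, Finset.mem_univ, true_and,
            Finset.mem_union, not_or] at hv
          obtain ⟨⟨hvI, hvJ⟩, u, hu, hadj⟩ := hv
          rw [Finset.mem_union]
          by_cases hvN : v ∈ nbrOn G Finset.univ I
          · exact Or.inl hvN
          · refine Or.inr ?_
            have huJ : u ∈ J := by
              rcases hu with hu' | hu'
              · exact absurd (by
                  simp only [nbrOn, Finset.mem_filter, Finset.mem_univ, true_and]
                  exact ⟨hvI, u, hu', hadj⟩) hvN
              · exact hu'
            have : v ∈ S := by
              rw [hSdef, Finset.mem_sdiff, Finset.mem_union]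
              exact ⟨Finset.mem_univ v, fun h => h.elim hvI hvN⟩
            simp only [nbrOn, Finset.mem_filter]
            exact ⟨this, hvJ, u, huJ, hadj⟩
        have hcard : (nbrOn G Finset.univ (I ∪ J)).card ≤
            (nbrOn G Finset.univ I).card + (nbrOn G S J).card :=
          le_trans (Finset.card_le_card hsub) (Finset.card_union_le _ _)
        have hcard' : ((nbrOn G Finset.univ (I ∪ J)).card : ℤ) ≤
            ((nbrOn G Finset.univ I).card : ℤ) + ((nbrOn G S J).card : ℤ) := by
          exact_mod_cast hcard
        simp only [surpOn, hKcard] at h2 ⊢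
        push_cast at h2
        omega
      · intro hS
        rcases I.eq_empty_or_nonempty with hIe | hIne
        · exfalso
          obtain ⟨x⟩ := aux_V_nonempty G hms
          have hnbr : nbrOn G Finset.univ (∅ : Finset V) = ∅ := by
            ext v; simp [nbrOn]
          rw [hSdef, hIe, hnbr] at hS
          simp at hS
          have := Finset.mem_univ x
          rw [hS] at this
          exact absurd this (Finset.notMem_empty x)
        · have h2 := aux_surp_ge G hms hIne hI
          omega
  refine ⟨key, fun u => ?_⟩
  have hu : IsIndep G {u} := by
    intro a ha b hb
    simp only [Finset.mem_singleton] at ha hb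
    subst ha; subst hb
    exact G.irrefl
  obtain ⟨h1, h2⟩ := key {u} hu
  constructor
  · simpa using h1
  · have hnbr : nbrOn G Finset.univ {u} = G.neighborFinset u := by
      ext v
      simp only [nbrOn, Finset.mem_filter, Finset.mem_univ, true_and, Finset.mem_singleton,
        Finset.mem_insert, SimpleGraph.mem_neighborFinset]
      constructor
      · rintro ⟨-, w, hw, hadj⟩; subst hw; exact hadj
      · intro hadj; exact ⟨fun h => G.irrefl (h ▸ hadj), u, rfl, hadj⟩
    have hsurp : surpOn G Finset.univ {u} = (G.degree u : ℤ) - 1 := by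
      have hd : (G.neighborFinset u).card = G.degree u := rfl
      rw [surpOn, hnbr, hd]
      simp
    rw [hsurp] at h2
    linarith
end

section
/- Suppose a graph G contains a funnel u with out-neighbor x. Let G' be obtained by deleting the vertices of N[u] ∩ N[x] and adding all edges between N(u) \ N[x] and N(x) \ N[u]. Then G has a vertex cover of size at most k if and only if G' has a vertex cover of size at most k − 1 − |N(u) ∩ N(x)|. -/
/-!
Write `S = N[u] ∩ N[x]`, `A = N(u) \ N[x]` and `B = N(x) \ N[u]`. Since `N(u) \ {x}` is a clique
and `u ~ x`, `S` is a clique, so a vertex cover of `G` misses at most one vertex of `S`; deleting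
`S` from it saves at least `|S| - 1 = |N(u) ∩ N(x)| + 1` vertices and still covers `G'` unless
it misses some `a ∈ A` and some `b ∈ B`. In that case the cover contains `x` and, as
`N[u] \ {x}` is a clique containing `a`, everything in `S` and in `A \ {a}`: deleting `S` and
adding `a` gives a cover of `G'` that again saves `|S| - 1` vertices.

Conversely, `A` and `B` are completely joined in `G'`, so a cover of `G'` contains `A` or `B`;
adding `x` (resp. `u`) and `N(u) ∩ N(x)` then covers every edge of `G` meeting `S`.
-/

open Finset

/-- The graph produced by the funnel reduction (P3) on funnel `u` with out-neighbor `x`: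
the vertices of `N[u] ∩ N[x]` are deleted (here left as isolated vertices), and all edges
between `N(u) \ N[x]` and `N(x) \ N[u]` are added. -/
def funnelReduce {V : Type*} (G : SimpleGraph V) (u x : V) : SimpleGraph V where
  Adj a b := a ≠ b ∧
    ¬((a = u ∨ G.Adj u a) ∧ (a = x ∨ G.Adj x a)) ∧
    ¬((b = u ∨ G.Adj u b) ∧ (b = x ∨ G.Adj x b)) ∧
    (G.Adj a b ∨
      (G.Adj u a ∧ ¬(a = x ∨ G.Adj x a) ∧ G.Adj x b ∧ ¬(b = u ∨ G.Adj u b)) ∨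
      (G.Adj x a ∧ ¬(a = u ∨ G.Adj u a) ∧ G.Adj u b ∧ ¬(b = x ∨ G.Adj x b)))
  symm := by
    constructor
    rintro a b ⟨h1, h2, h3, h4⟩
    refine ⟨h1.symm, h3, h2, ?_⟩
    rcases h4 with h | h | h
    · exact Or.inl h.symm
    · exact Or.inr (Or.inr ⟨h.2.2.1, h.2.2.2, h.1, h.2.1⟩)
    · exact Or.inr (Or.inl ⟨h.2.2.1, h.2.2.2, h.1, h.2.1⟩)
  loopless := by constructor; rintro a ⟨h1, _⟩; exact h1 rfl

namespace SimpleGraph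

variable {V : Type*} [DecidableEq V] (G : SimpleGraph V)

def closedNeighborFinset (v : V) [Fintype (G.neighborSet v)] : Finset V :=
  insert v (G.neighborFinset v)

variable {G}

@[simp]
theorem mem_closedNeighborFinset {v w : V} [Fintype (G.neighborSet v)] :
    w ∈ G.closedNeighborFinset v ↔ w = v ∨ G.Adj v w := by
  simp [closedNeighborFinset]

end SimpleGraph

open SimpleGraph

theorem IsCover.mem_of_isClique {V : Type*} {G : SimpleGraph V} {C s : Finset V}
    (hC : IsCover G C) (hs : G.IsClique (s : Set V)) {a b : V} (ha : a ∈ s) (haC : a ∉ C)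
    (hb : b ∈ s) (hba : b ≠ a) : b ∈ C :=
  (hC b a (hs hb ha hba)).resolve_right haC

theorem IsCover.card_sdiff_add_card_le {V : Type*} [DecidableEq V] {G : SimpleGraph V}
    {C s : Finset V} (hC : IsCover G C) (hs : G.IsClique (s : Set V)) :
    #(C \ s) + #s ≤ #C + 1 := by
  have hmiss : #(s \ C) ≤ 1 := card_le_one.2 fun a ha b hb =>
    by_contra fun hba => (mem_sdiff.1 hb).2
      (hC.mem_of_isClique hs (mem_sdiff.1 ha).1 (mem_sdiff.1 ha).2 (mem_sdiff.1 hb).1 (Ne.symm hba))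
  have h₁ := card_sdiff_add_card_inter C s
  have h₂ := card_sdiff_add_card_inter s C
  rw [inter_comm] at h₂
  omega

theorem funnelReduce_comm {V : Type*} (G : SimpleGraph V) (u x : V) :
    funnelReduce G u x = funnelReduce G x u := by
  ext a b
  simp only [funnelReduce]
  tauto

section Funnel

variable {V : Type*} [Fintype V] [DecidableEq V] {G : SimpleGraph V} [DecidableRel G.Adj]
  {u x : V}

theorem funnelReduce_adj {a b : V} :
    (funnelReduce G u x).Adj a b ↔ a ≠ b ∧
      a ∉ G.closedNeighborFinset u ∩ G.closedNeighborFinset x ∧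
      b ∉ G.closedNeighborFinset u ∩ G.closedNeighborFinset x ∧
      (G.Adj a b ∨
        a ∈ G.neighborFinset u \ G.closedNeighborFinset x ∧
          b ∈ G.neighborFinset x \ G.closedNeighborFinset u ∨
        a ∈ G.neighborFinset x \ G.closedNeighborFinset u ∧
          b ∈ G.neighborFinset u \ G.closedNeighborFinset x) := by
  simp only [funnelReduce, mem_inter, mem_sdiff, mem_closedNeighborFinset, mem_neighborFinset,
    and_assoc]

theorem IsCover.funnelReduce_subset_or_subset {C : Finset V}
    (hC : IsCover (funnelReduce G u x) C) :
    G.neighborFinset u \ G.closedNeighborFinset x ⊆ C ∨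
      G.neighborFinset x \ G.closedNeighborFinset u ⊆ C := by
  by_contra! ⟨hA, hB⟩
  obtain ⟨a, ha, haC⟩ := not_subset.1 hA
  obtain ⟨b, hb, hbC⟩ := not_subset.1 hB
  have hab : (funnelReduce G u x).Adj a b := by
    simp only [mem_sdiff, mem_closedNeighborFinset, mem_neighborFinset] at ha hb
    simp only [funnelReduce_adj, mem_inter, mem_sdiff, mem_closedNeighborFinset,
      mem_neighborFinset]
    refine ⟨?_, ?_, ?_, Or.inr (Or.inl ⟨ha, hb⟩)⟩ <;> grind
  exact (hC a b hab).elim haC hbC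

theorem IsCover.of_funnelReduce {C : Finset V} (hC : IsCover (funnelReduce G u x) C)
    (hA : G.neighborFinset u \ G.closedNeighborFinset x ⊆ C) :
    IsCover G (insert x (C ∪ (G.neighborFinset u ∩ G.neighborFinset x))) := by
  set T := insert x (C ∪ (G.neighborFinset u ∩ G.neighborFinset x))
  have hcore : ∀ p q, G.Adj p q → p ∈ G.closedNeighborFinset u ∩ G.closedNeighborFinset x →
      p ∈ T ∨ q ∈ T := by
    intro p q hpq hp
    simp only [mem_inter, mem_closedNeighborFinset] at hp
    rcases hp with ⟨rfl | hup, rfl | hxp⟩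
    · simp [T]
    · by_cases hq : q = x ∨ G.Adj x q
      · right
        rcases hq with rfl | hxq
        · simp [T]
        · simp [T, hpq, hxq]
      · exact Or.inr (mem_insert_of_mem (mem_union_left _ (hA (by simp [hpq, hq]))))
    · simp [T]
    · simp [T, hup, hxp]
  intro p q hpq
  by_cases hp : p ∈ G.closedNeighborFinset u ∩ G.closedNeighborFinset x
  · exact hcore p q hpq hp
  by_cases hq : q ∈ G.closedNeighborFinset u ∩ G.closedNeighborFinset x
  · exact (hcore q p hpq.symm hq).symm
  have hpq' : (funnelReduce G u x).Adj p q := funnelReduce_adj.2 ⟨hpq.ne, hp, hq, Or.inl hpq⟩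
  exact (hC p q hpq').imp (fun h => mem_insert_of_mem (mem_union_left _ h))
    (fun h => mem_insert_of_mem (mem_union_left _ h))

theorem closedNeighborFinset_inter_eq (hux : G.Adj u x) :
    G.closedNeighborFinset u ∩ G.closedNeighborFinset x =
      insert u (insert x (G.neighborFinset u ∩ G.neighborFinset x)) := by
  ext v
  simp only [mem_inter, mem_closedNeighborFinset, mem_insert, mem_neighborFinset]
  constructor
  · rintro ⟨rfl | huv, rfl | hxv⟩ <;> tauto
  · rintro (rfl | rfl | ⟨huv, hxv⟩)
    · exact ⟨Or.inl rfl, Or.inr hux.symm⟩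
    · exact ⟨Or.inr hux, Or.inl rfl⟩
    · exact ⟨Or.inr huv, Or.inr hxv⟩

theorem card_closedNeighborFinset_inter (hux : G.Adj u x) :
    #(G.closedNeighborFinset u ∩ G.closedNeighborFinset x) =
      #(G.neighborFinset u ∩ G.neighborFinset x) + 2 := by
  rw [closedNeighborFinset_inter_eq hux, card_insert_of_notMem, card_insert_of_notMem]
  · simp
  · simp [hux.ne]

theorem isClique_closedNeighborFinset_inter (hux : G.Adj u x)
    (hfun : G.IsClique ((G.neighborFinset u).erase x : Set V)) :
    G.IsClique ((G.closedNeighborFinset u ∩ G.closedNeighborFinset x : Finset V) : Set V) := by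
  rw [closedNeighborFinset_inter_eq hux, coe_insert, coe_insert, isClique_insert, isClique_insert]
  simp only [coe_inter, coe_neighborFinset, Set.mem_inter_iff, mem_neighborSet]
  refine ⟨⟨hfun.subset fun v hv => ?_, fun v hv _ => hv.2⟩, ?_⟩
  · simp only [coe_erase, coe_neighborFinset]
    exact ⟨hv.1, hv.2.ne'⟩
  · rintro v (rfl | hv) -
    exacts [hux, hv.1]

theorem IsCover.funnelReduce_of_subset {C C' : Finset V} (hC : IsCover G C)
    (hsub : C \ (G.closedNeighborFinset u ∩ G.closedNeighborFinset x) ⊆ C')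
    (hAB : G.neighborFinset u \ G.closedNeighborFinset x ⊆ C' ∨
      G.neighborFinset x \ G.closedNeighborFinset u ⊆ C') :
    IsCover (funnelReduce G u x) C' := by
  intro a b hab
  obtain ⟨-, ha, hb, hab | ⟨ha', hb'⟩ | ⟨ha', hb'⟩⟩ := funnelReduce_adj.1 hab
  · exact (hC a b hab).imp (fun h => hsub (mem_sdiff.2 ⟨h, ha⟩))
      (fun h => hsub (mem_sdiff.2 ⟨h, hb⟩))
  · exact hAB.imp (· ha') (· hb')
  · exact hAB.symm.imp (· ha') (· hb')

theorem IsCover.exists_funnelReduce_of_subset_or_subset (hux : G.Adj u x)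
    (hfun : G.IsClique ((G.neighborFinset u).erase x : Set V)) {C : Finset V}
    (hC : IsCover G C)
    (hAB : G.neighborFinset u \ G.closedNeighborFinset x ⊆ C ∨
      G.neighborFinset x \ G.closedNeighborFinset u ⊆ C) :
    ∃ C', IsCover (funnelReduce G u x) C' ∧
      #C' + #(G.closedNeighborFinset u ∩ G.closedNeighborFinset x) ≤ #C + 1 := by
  refine ⟨_, hC.funnelReduce_of_subset subset_rfl ?_,
    hC.card_sdiff_add_card_le (isClique_closedNeighborFinset_inter hux hfun)⟩
  exact hAB.imp
    (fun h => subset_sdiff.2 ⟨h, disjoint_sdiff_self_left.mono_right inter_subset_right⟩)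
    (fun h => subset_sdiff.2 ⟨h, disjoint_sdiff_self_left.mono_right inter_subset_left⟩)

theorem IsCover.exists_funnelReduce_of_not_subset
    (hfun : G.IsClique ((G.neighborFinset u).erase x : Set V)) {C : Finset V}
    (hC : IsCover G C) {a b : V} (ha : a ∈ G.neighborFinset u \ G.closedNeighborFinset x)
    (haC : a ∉ C) (hb : b ∈ G.neighborFinset x \ G.closedNeighborFinset u) (hbC : b ∉ C) :
    ∃ C', IsCover (funnelReduce G u x) C' ∧
      #C' + #(G.closedNeighborFinset u ∩ G.closedNeighborFinset x) ≤ #C + 1 := by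
  set S := G.closedNeighborFinset u ∩ G.closedNeighborFinset x
  have hxC : x ∈ C := (hC x b ((G.mem_neighborFinset _ _).1 (mem_sdiff.1 hb).1)).resolve_right hbC
  set K := insert u ((G.neighborFinset u).erase x)
  have hK : G.IsClique (K : Set V) := by
    rw [coe_insert, isClique_insert]
    exact ⟨hfun, fun v hv _ => (G.mem_neighborFinset _ _).1 (mem_erase.1 hv).2⟩
  have hmemK : ∀ v, v = u ∨ G.Adj u v → v ≠ x → v ∈ K := by
    rintro v (rfl | huv) hvx
    exacts [mem_insert_self _ _, mem_insert_of_mem (mem_erase.2 ⟨hvx, by simpa using huv⟩)]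
  have hAK : ∀ v ∈ G.neighborFinset u \ G.closedNeighborFinset x, v ∈ K := fun v hv =>
    hmemK v (Or.inr ((G.mem_neighborFinset _ _).1 (mem_sdiff.1 hv).1))
      (fun hvx => (mem_sdiff.1 hv).2 (hvx ▸ mem_insert_self _ _))
  have hKC : ∀ v ∈ K, v ≠ a → v ∈ C := fun v hv hva =>
    hC.mem_of_isClique hK (hAK a ha) haC hv hva
  have hSC : S ⊆ C := by
    intro v hv
    rcases eq_or_ne v x with rfl | hvx
    · exact hxC
    refine hKC v (hmemK v (mem_closedNeighborFinset.1 (mem_inter.1 hv).1) hvx) ?_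
    rintro rfl
    exact (mem_sdiff.1 ha).2 (mem_inter.1 hv).2
  have hA : G.neighborFinset u \ G.closedNeighborFinset x ⊆ insert a (C \ S) := by
    intro v hv
    rcases eq_or_ne v a with rfl | hva
    · exact mem_insert_self _ _
    exact mem_insert_of_mem (mem_sdiff.2 ⟨hKC v (hAK v hv) hva,
      disjoint_left.1 (disjoint_sdiff_self_left.mono_right inter_subset_right) hv⟩)
  refine ⟨insert a (C \ S), hC.funnelReduce_of_subset (subset_insert _ _) (Or.inl hA), ?_⟩
  have := card_insert_le a (C \ S)
  have := card_sdiff_of_subset hSC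
  have := card_le_card hSC
  omega

theorem IsCover.exists_funnelReduce (hux : G.Adj u x)
    (hfun : G.IsClique ((G.neighborFinset u).erase x : Set V)) {C : Finset V}
    (hC : IsCover G C) :
    ∃ C', IsCover (funnelReduce G u x) C' ∧
      #C' + 1 + #(G.neighborFinset u ∩ G.neighborFinset x) ≤ #C := by
  suffices ∃ C', IsCover (funnelReduce G u x) C' ∧
      #C' + #(G.closedNeighborFinset u ∩ G.closedNeighborFinset x) ≤ #C + 1 by
    obtain ⟨C', hC', hcard⟩ := this
    rw [card_closedNeighborFinset_inter hux] at hcard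
    exact ⟨C', hC', by omega⟩
  by_cases hAB : G.neighborFinset u \ G.closedNeighborFinset x ⊆ C ∨
      G.neighborFinset x \ G.closedNeighborFinset u ⊆ C
  · exact hC.exists_funnelReduce_of_subset_or_subset hux hfun hAB
  · rw [not_or, not_subset, not_subset] at hAB
    obtain ⟨⟨a, ha, haC⟩, ⟨b, hb, hbC⟩⟩ := hAB
    exact hC.exists_funnelReduce_of_not_subset hfun ha haC hb hbC

end Funnel

/-- Correctness of the funnel reduction (P3): `G` has a vertex cover of size at most `k`
iff the reduced graph has a vertex cover of size at most `k − 1 − |N(u) ∩ N(x)|`. -/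
theorem funnelReduce_cover_iff {V : Type*} [Fintype V] [DecidableEq V]
    (G : SimpleGraph V) [DecidableRel G.Adj] (u x : V) (k : ℕ)
    (hux : G.Adj u x)
    (hclique : ∀ a ∈ (G.neighborFinset u).erase x, ∀ b ∈ (G.neighborFinset u).erase x,
      a ≠ b → G.Adj a b) :
    (∃ C : Finset V, IsCover G C ∧ C.card ≤ k) ↔
    (∃ C : Finset V, IsCover (funnelReduce G u x) C ∧
      C.card + 1 + (G.neighborFinset u ∩ G.neighborFinset x).card ≤ k) := by
  constructor
  · rintro ⟨C, hC, hCk⟩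
    obtain ⟨C', hC', hcard⟩ := hC.exists_funnelReduce hux hclique
    exact ⟨C', hC', hcard.trans hCk⟩
  · rintro ⟨C, hC, hCk⟩
    have hcard : ∀ v, #(insert v (C ∪ (G.neighborFinset u ∩ G.neighborFinset x))) ≤ k :=
      fun v => (card_insert_le _ _).trans (by grind [card_union_le])
    rcases hC.funnelReduce_subset_or_subset with hA | hB
    · exact ⟨_, hC.of_funnelReduce hA, hcard x⟩
    · rw [funnelReduce_comm] at hC
      rw [inter_comm] at hcard
      exact ⟨_, hC.of_funnelReduce hB, hcard u⟩
end

section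
/- Suppose that for a class of graphs closed under vertex deletion there exist vertex cover algorithms with runtimes O*(e^{aμ + bk}) and O(e^{cn}) for constants a, b, c ≥ 0, where μ = k − λ(G) is the LP gap. Then combining them via preprocessing (removing non-positive-surplus independent sets so that λ(G) = n/2) yields an algorithm with runtime O*(e^{dk}) where d = 2c(a+b)/(a+2c). (Abstract form: for any k, n ≥ 0 with λ = n/2 ≤ k, min(a(k − n/2) + bk, cn) ≤ 2c(a+b)k/(a+2c).) -/
/-- Arithmetic content of combining a parameterized algorithm with runtime
`O*(e^{aμ + bk})` (with `μ = k − n/2`) and an exact algorithm with runtime `O(e^{cn})`: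
the minimum of the two exponents is at most `(2c(a+b)/(a+2c))·k`. -/
theorem combine_measures (a b c k n : ℝ)
    (ha : 0 ≤ a) (hb : 0 ≤ b) (hc : 0 ≤ c) (hpos : 0 < a + 2*c)
    (hk : 0 ≤ k) (hn : 0 ≤ n) (hnk : n ≤ 2*k) :
    min (a * (k - n/2) + b * k) (c * n) ≤ (2*c*(a+b)/(a+2*c)) * k := by
  have h1 : min (a * (k - n/2) + b * k) (c * n) ≤ a * (k - n/2) + b * k := min_le_left _ _
  have h2 : min (a * (k - n/2) + b * k) (c * n) ≤ c * n := min_le_right _ _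
  rw [div_mul_eq_mul_div, le_div_iff₀ hpos]
  nlinarith [mul_nonneg ha (sub_nonneg.2 h2), mul_nonneg hc (sub_nonneg.2 h1)]
end

section
/- Let u be a blocked vertex of a simplified graph G, meaning minsurp(G − N[u]) ≤ 0, and let I be a min-set of G − N[u]. Then some vertex x ∈ I has a common neighbor with u in G. -/
open Finset

/-- If `u` is a blocked vertex of a simplified graph `G` (with `minsurp(G) ≥ 2` and
`minsurp(G − N[u]) ≤ 0`) and `I` is a min-set of `G − N[u]`, then some `x ∈ I` has a
common neighbor with `u`. -/
theorem blocked_vertex_min_set_shares_neighbor {V : Type*} [Fintype V] [DecidableEq V]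
    (G : SimpleGraph V) [DecidableRel G.Adj] (u : V)
    (hms : 2 ≤ minsurpOn G Finset.univ)
    (hblocked : minsurpOn G (Finset.univ \ insert u (G.neighborFinset u)) ≤ 0)
    (I : Finset V)
    (hIS : I ⊆ Finset.univ \ insert u (G.neighborFinset u))
    (hne : I.Nonempty) (hind : IsIndep G I)
    (hmin : surpOn G (Finset.univ \ insert u (G.neighborFinset u)) I =
      minsurpOn G (Finset.univ \ insert u (G.neighborFinset u))) :
    ∃ x ∈ I, ∃ t : V, G.Adj u t ∧ G.Adj x t := by
  by_contra h
  push_neg at h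
  set S := Finset.univ \ insert u (G.neighborFinset u) with hSdef
  have hSmem : ∀ x ∈ I, x ∉ insert u (G.neighborFinset u) := fun x hx =>
    (Finset.mem_sdiff.mp (hIS hx)).2
  have hnbr : nbrOn G Finset.univ I = nbrOn G S I := by
    apply Finset.Subset.antisymm
    · intro v hv
      simp only [nbrOn, Finset.mem_filter] at hv ⊢
      obtain ⟨-, hvI, x, hx, hadj⟩ := hv
      refine ⟨Finset.mem_sdiff.mpr ⟨Finset.mem_univ _, ?_⟩, hvI, x, hx, hadj⟩
      intro hmemv
      rcases Finset.mem_insert.mp hmemv with rfl | hmemv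
      · exact hSmem x hx (Finset.mem_insert.mpr
          (Or.inr ((G.mem_neighborFinset _ _).mpr hadj.symm)))
      · exact h x hx v ((G.mem_neighborFinset _ _).mp hmemv) hadj
    · intro v hv
      simp only [nbrOn, Finset.mem_filter] at hv ⊢
      exact ⟨Finset.mem_univ _, hv.2⟩
  have hbdd : BddBelow {z : ℤ | ∃ J : Finset V, J ⊆ Finset.univ ∧ J.Nonempty ∧
      IsIndep G J ∧ z = surpOn G Finset.univ J} := by
    refine ⟨-(Fintype.card V : ℤ), ?_⟩
    rintro z ⟨J, -, -, -, rfl⟩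
    have h1 : (J.card : ℤ) ≤ (Fintype.card V : ℤ) := by
      exact_mod_cast Finset.card_le_univ J
    have h2 : (0 : ℤ) ≤ ((nbrOn G Finset.univ J).card : ℤ) := Int.natCast_nonneg _
    unfold surpOn
    linarith
  have hmem : surpOn G Finset.univ I ∈ {z : ℤ | ∃ J : Finset V, J ⊆ Finset.univ ∧
      J.Nonempty ∧ IsIndep G J ∧ z = surpOn G Finset.univ J} :=
    ⟨I, Finset.subset_univ I, hne, hind, rfl⟩
  have h2 : minsurpOn G Finset.univ ≤ surpOn G Finset.univ I := csInf_le hbdd hmem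
  have heq : surpOn G Finset.univ I = surpOn G S I := by
    unfold surpOn; rw [hnbr]
  have h3 : surpOn G S I ≤ 0 := hmin ▸ hblocked
  linarith
end
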